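/- Let p ∈ (0,1], ε, δ ∈ (0,1), and let T be the least positive integer satisfying (e^{ε/(1+ε)}/(1+ε))^T + (e^{-ε/(1-ε)}/(1-ε))^T ≤ δ. Let X₁, X₂, … be i.i.d. Bernoulli(p) random variables and let N = min{n : X₁ + ⋯ + X_n = T}. Then P(p(1-ε) ≤ T/N ≤ p(1+ε)) ≥ 1 - δ. -/

import Mathlib

open MeasureTheory ProbabilityTheory Real

/-!
Let `S n` be the number of successes among the first `n` trials, so that `N` is the first time
`S` reaches `T`. With `n₀ = ⌈T / (p(1+ε))⌉ - 1` and `m = ⌊T / (p(1-ε))⌋`, the estimate `T / N`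
is `ε`-accurate as soon as `S n₀ < T ≤ S m`, because `S` climbs in unit steps and therefore
`n₀ < N ≤ m`. The two failure events `T ≤ S n₀` and `S m < T` are binomial tail events, and the
Chernoff bound `P(S n ≥ a) ≤ e^{-ta} E e^{t S n} ≤ exp(-ta + np(e^t - 1))`, evaluated at
`t = log (1 + ε)` and `t = log (1 - ε)` respectively, bounds them by the two terms of `hT`.
-/

lemma Nat.exists_le_eq_of_le_add_one {f : ℕ → ℕ} (hf : ∀ n, f (n + 1) ≤ f n + 1) {T : ℕ}
    (h0 : f 0 ≤ T) : ∀ {m}, T ≤ f m → ∃ n ≤ m, f n = T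
  | 0, hm => ⟨0, le_rfl, le_antisymm h0 hm⟩
  | m + 1, hm => by
    by_cases hT : T ≤ f m
    · obtain ⟨n, hnm, hn⟩ := exists_le_eq_of_le_add_one hf h0 hT
      exact ⟨n, hnm.trans m.le_succ, hn⟩
    · exact ⟨m + 1, le_rfl, by linarith [hf m]⟩

def successCount {Ω : Type*} (X : ℕ → Ω → Bool) (n : ℕ) (ω : Ω) : ℕ :=
  ∑ i ∈ Finset.range n, if X i ω then 1 else 0

section HittingTime

variable {Ω : Type*} (X : ℕ → Ω → Bool) (ω : Ω)

lemma successCount_succ_le (n : ℕ) : successCount X (n + 1) ω ≤ successCount X n ω + 1 := by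
  rw [successCount, Finset.sum_range_succ]
  split <;> simp [successCount]

lemma successCount_le_self (n : ℕ) : successCount X n ω ≤ n :=
  (Finset.sum_le_card_nsmul _ _ 1 fun i _ => by split <;> simp).trans_eq (by simp)

lemma monotone_successCount : Monotone (successCount X · ω) := fun _ _ h =>
  Finset.sum_le_sum_of_subset (Finset.range_subset_range.2 h)

lemma sInf_successCount_eq_mem_Ioc {T a b : ℕ} (ha : successCount X a ω < T)
    (hb : T ≤ successCount X b ω) : sInf {n | successCount X n ω = T} ∈ Set.Ioc a b := by
  obtain ⟨n, hnb, hn⟩ := Nat.exists_le_eq_of_le_add_one (f := (successCount X · ω))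
    (successCount_succ_le X ω) (Nat.zero_le T) hb
  have hmem : n ∈ {n | successCount X n ω = T} := hn
  have hhit : successCount X (sInf {n | successCount X n ω = T}) ω = T := Nat.sInf_mem ⟨n, hmem⟩
  refine ⟨lt_of_not_ge fun hle => ?_, (Nat.sInf_le hmem).trans hnb⟩
  exact ha.not_ge (hhit ▸ monotone_successCount X ω hle)

end HittingTime

lemma exp_nat_mul_sub_log (x : ℝ) {c : ℝ} (hc : 0 < c) (T : ℕ) :
    exp (T * (x - log c)) = (exp x / c) ^ T := by
  rw [exp_nat_mul, exp_sub, exp_log hc]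

section Chernoff

variable {Ω : Type*} [MeasurableSpace Ω] {μ : Measure Ω} [IsProbabilityMeasure μ]

lemma mgf_ite_one_zero {b : Ω → Bool} (hb : Measurable b) (t : ℝ) :
    mgf (fun ω => if b ω then (1 : ℝ) else 0) μ t = 1 + μ.real {ω | b ω} * (exp t - 1) := by
  have hs : MeasurableSet {ω | b ω} := hb (measurableSet_singleton true)
  have hexp : (fun ω => exp (t * if b ω then (1 : ℝ) else 0))
      = fun ω => 1 + {ω | b ω}.indicator (fun _ => exp t - 1) ω := by
    ext ω
    by_cases h : b ω <;> simp [h]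
  rw [mgf, hexp, integral_add (integrable_const 1) ((integrable_const _).indicator hs),
    integral_indicator_const _ hs, integral_const]
  simp

variable {X : ℕ → Ω → Bool} {p : ℝ}

lemma measurable_successCount (hX : ∀ i, Measurable (X i)) (n : ℕ) :
    Measurable (successCount X n) :=
  Finset.measurable_fun_sum _ fun i _ =>
    (Measurable.of_discrete (f := fun b : Bool => if b then 1 else 0)).comp (hX i)

lemma integrable_exp_mul_successCount (hX : ∀ i, Measurable (X i)) (n : ℕ) (t : ℝ) :
    Integrable (fun ω => exp (t * successCount X n ω)) μ := by
  have hmeas : Measurable fun ω => (successCount X n ω : ℝ) :=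
    measurable_from_nat.comp (measurable_successCount hX n)
  refine .of_bound (hmeas.const_mul t).exp.aestronglyMeasurable (exp (|t| * n))
    (ae_of_all _ fun ω => ?_)
  have hS : (successCount X n ω : ℝ) ≤ n := by exact_mod_cast successCount_le_self X ω n
  rw [norm_of_nonneg (exp_nonneg _), exp_le_exp]
  calc t * successCount X n ω ≤ |t| * successCount X n ω := by gcongr; exact le_abs_self t
    _ ≤ |t| * n := by gcongr

lemma mgf_successCount (hX : ∀ i, Measurable (X i)) (hindep : iIndepFun X μ)
    (hp : ∀ i, μ.real {ω | X i ω} = p) (n : ℕ) (t : ℝ) :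
    mgf (fun ω => (successCount X n ω : ℝ)) μ t = (1 + p * (exp t - 1)) ^ n := by
  set Y : ℕ → Ω → ℝ := fun i ω => if X i ω then 1 else 0
  have hsum : (fun ω => (successCount X n ω : ℝ)) = ∑ i ∈ Finset.range n, Y i := by
    ext ω
    simp [successCount, Y, Finset.sum_apply]
  have hYindep : iIndepFun Y μ :=
    hindep.comp (fun _ b => if b then (1 : ℝ) else 0) fun _ => Measurable.of_discrete
  have hYmeas : ∀ i, Measurable (Y i) := fun i =>
    (Measurable.of_discrete (f := fun b : Bool => if b then (1 : ℝ) else 0)).comp (hX i)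
  rw [hsum, hYindep.mgf_sum hYmeas]
  simp [Y, mgf_ite_one_zero (hX _), hp]

lemma mgf_successCount_le (hX : ∀ i, Measurable (X i)) (hindep : iIndepFun X μ)
    (hp : ∀ i, μ.real {ω | X i ω} = p) (n : ℕ) (t : ℝ) :
    mgf (fun ω => (successCount X n ω : ℝ)) μ t ≤ exp (n * p * (exp t - 1)) := by
  have hp0 : 0 ≤ p := hp 0 ▸ measureReal_nonneg
  have hp1 : p ≤ 1 := hp 0 ▸ measureReal_le_one
  rw [mgf_successCount hX hindep hp, mul_assoc, exp_nat_mul]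
  gcongr
  · nlinarith [exp_pos t]
  · linarith [add_one_le_exp (p * (exp t - 1))]

lemma measureReal_le_successCount_le (hX : ∀ i, Measurable (X i)) (hindep : iIndepFun X μ)
    (hp : ∀ i, μ.real {ω | X i ω} = p) {t : ℝ} (ht : 0 ≤ t) (n : ℕ) (a : ℝ) :
    μ.real {ω | a ≤ successCount X n ω} ≤ exp (-t * a + n * p * (exp t - 1)) := by
  rw [exp_add]
  exact (measure_ge_le_exp_mul_mgf a ht (integrable_exp_mul_successCount hX n t)).trans
    (by gcongr; exact mgf_successCount_le hX hindep hp n t)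

lemma measureReal_successCount_le_le (hX : ∀ i, Measurable (X i)) (hindep : iIndepFun X μ)
    (hp : ∀ i, μ.real {ω | X i ω} = p) {t : ℝ} (ht : t ≤ 0) (n : ℕ) (a : ℝ) :
    μ.real {ω | successCount X n ω ≤ a} ≤ exp (-t * a + n * p * (exp t - 1)) := by
  rw [exp_add]
  exact (measure_le_le_exp_mul_mgf a ht (integrable_exp_mul_successCount hX n t)).trans
    (by gcongr; exact mgf_successCount_le hX hindep hp n t)

lemma measureReal_le_successCount_le_of_mul_le (hX : ∀ i, Measurable (X i))
    (hindep : iIndepFun X μ) (hp : ∀ i, μ.real {ω | X i ω} = p)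
    {ε : ℝ} (hε : 0 ≤ ε) {n T : ℕ} (hn : n * (p * (1 + ε)) ≤ T) :
    μ.real {ω | T ≤ successCount X n ω} ≤ (exp (ε / (1 + ε)) / (1 + ε)) ^ T := by
  have h1ε : 0 < 1 + ε := by linarith
  have hmean : n * p * ε ≤ T * ε / (1 + ε) := by
    rw [le_div_iff₀ h1ε]; nlinarith
  have hset : {ω | T ≤ successCount X n ω} = {ω | (T : ℝ) ≤ successCount X n ω} := by
    simp only [Nat.cast_le]
  calc μ.real {ω | T ≤ successCount X n ω}
      ≤ exp (-log (1 + ε) * T + n * p * (exp (log (1 + ε)) - 1)) :=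
        hset ▸ measureReal_le_successCount_le hX hindep hp (log_nonneg (by linarith)) n T
    _ ≤ exp (T * (ε / (1 + ε) - log (1 + ε))) := by
        rw [exp_log h1ε, exp_le_exp]
        linarith [mul_div_assoc (T : ℝ) ε (1 + ε)]
    _ = (exp (ε / (1 + ε)) / (1 + ε)) ^ T := exp_nat_mul_sub_log _ h1ε T

lemma measureReal_successCount_lt_le_of_le_mul (hX : ∀ i, Measurable (X i))
    (hindep : iIndepFun X μ) (hp : ∀ i, μ.real {ω | X i ω} = p)
    {ε : ℝ} (hε0 : 0 ≤ ε) (hε1 : ε < 1) {m T : ℕ} (hm : T ≤ (m + 1) * (p * (1 - ε))) :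
    μ.real {ω | successCount X m ω < T} ≤ (exp (-ε / (1 - ε)) / (1 - ε)) ^ T := by
  have h1ε : 0 < 1 - ε := by linarith
  have hmean : T * ε / (1 - ε) ≤ (m + 1) * p * ε := by
    rw [div_le_iff₀ h1ε]; nlinarith
  have hlog : log (1 - ε) ≤ -ε := by linarith [log_le_sub_one_of_pos h1ε]
  have hset : {ω | successCount X m ω < T} = {ω | (successCount X m ω : ℝ) ≤ T - 1} := by
    ext ω
    simp only [Set.mem_ofPred_eq, Nat.lt_iff_add_one_le, le_sub_iff_add_le]
    exact_mod_cast Iff.rfl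
  calc μ.real {ω | successCount X m ω < T}
      ≤ exp (-log (1 - ε) * (T - 1) + m * p * (exp (log (1 - ε)) - 1)) :=
        hset ▸ measureReal_successCount_le_le hX hindep hp (log_nonpos h1ε.le (by linarith))
          m (T - 1)
    _ ≤ exp (T * (-ε / (1 - ε) - log (1 - ε))) := by
        -- `log (1 - ε) ≤ -ε ≤ -p ε` absorbs the `- 1` in `T - 1` and the `+ 1` in `m + 1`.
        rw [exp_log h1ε, exp_le_exp, neg_div]
        have hp1 : p ≤ 1 := hp 0 ▸ measureReal_le_one
        nlinarith [mul_div_assoc (T : ℝ) ε (1 - ε)]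
    _ = (exp (-ε / (1 - ε)) / (1 - ε)) ^ T := exp_nat_mul_sub_log _ h1ε T

lemma ofReal_one_sub_le_of_compl_union_subset {A B G : Set Ω} {δ : ℝ}
    (hAB : μ.real A + μ.real B ≤ δ) (hG : (A ∪ B)ᶜ ⊆ G) : ENNReal.ofReal (1 - δ) ≤ μ G := by
  refine ENNReal.ofReal_le_of_le_toReal (show 1 - δ ≤ μ.real G from ?_)
  have hcover := measureReal_union_le (μ := μ) (A ∪ B) (A ∪ B)ᶜ
  rw [Set.union_compl_self, probReal_univ] at hcover
  linarith [measureReal_union_le (μ := μ) A B, measureReal_mono (μ := μ) hG]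

end Chernoff

lemma div_mem_Icc_of_mem_Ioc_ceil_floor {T a b : ℝ} (ha : 0 < a) (hb : 0 < b) {N : ℕ}
    (hN : N ∈ Set.Ioc (⌈T / b⌉₊ - 1) ⌊T / a⌋₊) : T / N ∈ Set.Icc a b := by
  obtain ⟨hlo, hhi⟩ := hN
  have hN0 : (0 : ℝ) < N := by exact_mod_cast Nat.zero_lt_of_lt hlo
  have hNb : T / b ≤ N := Nat.ceil_le.1 (by omega)
  have hNa : (N : ℝ) ≤ T / a := (Nat.le_floor_iff' (by omega)).1 hhi
  constructor
  · rw [le_div_iff₀ hN0, mul_comm]; exact (le_div_iff₀ ha).1 hNa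
  · rw [div_le_iff₀ hN0, mul_comm]; exact (div_le_iff₀ hb).1 hNb

theorem negBinomial_estimator_pac_general
    {Ω : Type*} [MeasurableSpace Ω] (μ : Measure Ω) [IsProbabilityMeasure μ]
    (p : ℝ) (hp : p ∈ Set.Ioc (0:ℝ) 1)
    (ε δ : ℝ) (hε : ε ∈ Set.Ioo (0:ℝ) 1)
    (T : ℕ)
    (hT : (Real.exp (ε / (1 + ε)) / (1 + ε)) ^ T
            + (Real.exp (-ε / (1 - ε)) / (1 - ε)) ^ T ≤ δ)
    (X : ℕ → Ω → Bool) (hXmeas : ∀ i, Measurable (X i))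
    (hXindep : iIndepFun X μ)
    (hXdist : ∀ i, μ {ω | X i ω = true} = ENNReal.ofReal p)
    (N : Ω → ℕ)
    (hN : ∀ ω, N ω = sInf {n : ℕ | ∑ i ∈ Finset.range n, (if X i ω then 1 else 0) = T}) :
    ENNReal.ofReal (1 - δ)
      ≤ μ {ω | p * (1 - ε) ≤ (T : ℝ) / (N ω : ℝ) ∧ (T : ℝ) / (N ω : ℝ) ≤ p * (1 + ε)} := by
  obtain ⟨hp0, -⟩ := hp
  obtain ⟨hε0, hε1⟩ := hε
  have hpX : ∀ i, μ.real {ω | X i ω} = p := fun i => by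
    rw [measureReal_def, hXdist i, ENNReal.toReal_ofReal hp0.le]
  have ha : 0 < p * (1 - ε) := by nlinarith
  have hb : 0 < p * (1 + ε) := by nlinarith
  set n₀ := ⌈(T : ℝ) / (p * (1 + ε))⌉₊ - 1
  set m := ⌊(T : ℝ) / (p * (1 - ε))⌋₊
  have hn₀ : (n₀ : ℝ) ≤ T / (p * (1 + ε)) :=
    (Nat.cast_le.2 (Nat.sub_le_of_le_add (Nat.ceil_le_floor_add_one _))).trans
      (Nat.floor_le (by positivity))
  have hm : (T : ℝ) / (p * (1 - ε)) ≤ m + 1 := (Nat.lt_floor_add_one _).le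
  have hupper := measureReal_le_successCount_le_of_mul_le hXmeas hXindep hpX hε0.le
    ((le_div_iff₀ hb).1 hn₀)
  have hlower := measureReal_successCount_lt_le_of_le_mul hXmeas hXindep hpX hε0.le hε1
    ((div_le_iff₀ ha).1 hm)
  refine ofReal_one_sub_le_of_compl_union_subset ((add_le_add hupper hlower).trans hT) ?_
  intro ω hω
  simp only [Set.mem_compl_iff, Set.mem_union, Set.mem_ofPred_eq, not_or, not_le, not_lt] at hω
  rw [Set.mem_ofPred_eq, hN ω]
  exact div_mem_Icc_of_mem_Ioc_ceil_floor ha hb (sInf_successCount_eq_mem_Ioc X ω hω.1 hω.2)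

/-- PAC guarantee of the adaptive-stopping estimator: if `T` is the least
positive integer with `(e^{ε/(1+ε)}/(1+ε))^T + (e^{-ε/(1-ε)}/(1-ε))^T ≤ δ`,
the `Xᵢ` are i.i.d. Bernoulli(p), and `N` is the index of the `T`-th success,
then `P(p(1-ε) ≤ T/N ≤ p(1+ε)) ≥ 1 - δ`. -/
theorem negBinomial_estimator_pac
    {Ω : Type*} [MeasurableSpace Ω] (μ : Measure Ω) [IsProbabilityMeasure μ]
    (p : ℝ) (hp : p ∈ Set.Ioc (0:ℝ) 1)
    (ε δ : ℝ) (hε : ε ∈ Set.Ioo (0:ℝ) 1) (hδ : δ ∈ Set.Ioo (0:ℝ) 1)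
    (T : ℕ) (hTpos : 0 < T)
    (hT : (Real.exp (ε / (1 + ε)) / (1 + ε)) ^ T
            + (Real.exp (-ε / (1 - ε)) / (1 - ε)) ^ T ≤ δ)
    (hTmin : ∀ T' : ℕ, 0 < T' →
      (Real.exp (ε / (1 + ε)) / (1 + ε)) ^ T'
        + (Real.exp (-ε / (1 - ε)) / (1 - ε)) ^ T' ≤ δ → T ≤ T')
    (X : ℕ → Ω → Bool) (hXmeas : ∀ i, Measurable (X i))
    (hXindep : iIndepFun X μ)
    (hXdist : ∀ i, μ {ω | X i ω = true} = ENNReal.ofReal p)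
    (N : Ω → ℕ)
    (hN : ∀ ω, N ω = sInf {n : ℕ | ∑ i ∈ Finset.range n, (if X i ω then 1 else 0) = T}) :
    ENNReal.ofReal (1 - δ)
      ≤ μ {ω | p * (1 - ε) ≤ (T : ℝ) / (N ω : ℝ) ∧ (T : ℝ) / (N ω : ℝ) ≤ p * (1 + ε)} :=
  negBinomial_estimator_pac_general μ p hp ε δ hε T hT X hXmeas hXindep hXdist N hN
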